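/- Let b ∈ B_Γ. Then there exists an IC, IR, and NPT Γ-mechanism μ* = (q*,s*) whose buyer payoff function equals b on ℝ_+^k and such that s*(x) = b′(x;x) − b(x) for every x ∈ ℝ_+^k (a seller-favorable mechanism); equivalently, q*(x) may be chosen in ∂b(x) ∩ Γ with q*(x)·x = b′(x;x) for every x ∈ ℝ_+^k. -/

import Mathlib

open MeasureTheory Filter

noncomputable section

abbrev E (k : ℕ) := EuclideanSpace ℝ (Fin k)

def orthant (k : ℕ) : Set (E k) := {x | ∀ i, 0 ≤ x i}

/-- The dot product `g · x` on `ℝ^k`. -/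
def dotp {k : ℕ} (g x : E k) : ℝ := ∑ i, g i * x i

def IsAlloc {k : ℕ} (Γ : Set (E k)) (q : E k → E k) : Prop :=
  ∀ x ∈ orthant k, q x ∈ Γ

def IsIC {k : ℕ} (q : E k → E k) (s : E k → ℝ) : Prop :=
  ∀ x ∈ orthant k, ∀ y ∈ orthant k, dotp (q x) x - s x ≥ dotp (q y) x - s y

def IsIR {k : ℕ} (q : E k → E k) (s : E k → ℝ) : Prop :=
  ∀ x ∈ orthant k, 0 ≤ dotp (q x) x - s x

def IsNPT {k : ℕ} (s : E k → ℝ) : Prop :=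
  ∀ x ∈ orthant k, 0 ≤ s x

/-- The set of subgradients of `f` at `x`. -/
def Subgrad {k : ℕ} (f : E k → ℝ) (x : E k) : Set (E k) :=
  {g | ∀ y, f y - f x ≥ dotp g (y - x)}

/-- `b ∈ B_Γ`: convex on `ℝ^k`, `b 0 = 0`, and a subgradient in `Γ` at every point. -/
def BClass {k : ℕ} (Γ : Set (E k)) (b : E k → ℝ) : Prop :=
  ConvexOn ℝ Set.univ b ∧ b 0 = 0 ∧ ∀ x, (Subgrad b x ∩ Γ).Nonempty

/-- One-sided directional derivative `f′(x;y) = lim_{δ→0⁺} (f(x+δy)-f(x))/δ`. -/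
def dirDeriv {k : ℕ} (b : E k → ℝ) (x y : E k) : ℝ :=
  limUnder (nhdsWithin (0:ℝ) (Set.Ioi 0)) fun δ => (b (x + δ • y) - b x) / δ

/-- The extended buyer payoff function `b(x) = sup_{z ∈ ℝ₊^k} [q(z)·x − s(z)]`. -/
def extPayoff {k : ℕ} (q : E k → E k) (s : E k → ℝ) (x : E k) : ℝ :=
  sSup ((fun z => dotp (q z) x - s z) '' orthant k)

def SellerFavorable {k : ℕ} (q : E k → E k) (s : E k → ℝ) : Prop :=
  ∀ x ∈ orthant k, s x = dirDeriv (extPayoff q s) x x - extPayoff q s x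

/-! Every `g ∈ ∂b(x)` has `g · y ≤ b′(x; y)`, while subgradients `g_δ` taken at `x + δ • y`
satisfy `g_δ · y ≥ (b(x + δ • y) - b(x)) / δ`. As `δ → 0⁺`, compactness of `Γ` yields a limit
point of the `g_δ ∈ Γ`, which lies in `∂b(x)` because the subgradient graph of a continuous
function is closed, and so attains `b′(x; y)`. Taking it at `y = x` as the allocation, with
payment `q(x) · x − b(x)`, the subgradient inequality is exactly incentive compatibility. -/

section

variable {k : ℕ} {b : E k → ℝ} {x y g : E k}

lemma dotp_eq_inner (g x : E k) : dotp g x = inner ℝ g x := by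
  simp [dotp, PiLp.inner_apply, RCLike.inner_apply, mul_comm]

lemma dotp_sub_right (g x y : E k) : dotp g (x - y) = dotp g x - dotp g y := by
  simp only [dotp_eq_inner, inner_sub_right]

lemma dotp_smul_right (g x : E k) (c : ℝ) : dotp g (c • x) = c * dotp g x := by
  simp only [dotp_eq_inner, inner_smul_right]

lemma dotp_nonneg_of_mem_orthant (hg : g ∈ orthant k) (hx : x ∈ orthant k) : 0 ≤ dotp g x :=
  Finset.sum_nonneg fun i _ => mul_nonneg (hg i) (hx i)

lemma ConvexOn.tendsto_dirDeriv (hb : ConvexOn ℝ Set.univ b) (x y : E k) :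
    Tendsto (fun δ : ℝ => (b (x + δ • y) - b x) / δ) (nhdsWithin 0 (Set.Ioi 0))
      (nhds (dirDeriv b x y)) := by
  have hline : ConvexOn ℝ Set.univ (fun δ : ℝ => b (x + δ • y)) := by
    have hcomp : (fun δ : ℝ => b (x + δ • y)) = b ∘ AffineMap.lineMap x (x + y) := by
      funext δ
      simp [AffineMap.lineMap_apply, add_comm]
    simpa [hcomp] using hb.comp_affineMap (AffineMap.lineMap x (x + y))
  have hderiv := (hline.differentiableWithinAt_Ioi_of_mem_interior (x := 0)
    (by simp)).hasDerivWithinAt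
  have hslope : slope (fun δ : ℝ => b (x + δ • y)) 0 = fun δ => (b (x + δ • y) - b x) / δ := by
    funext δ
    simp [slope_def_field]
  rw [hasDerivWithinAt_iff_tendsto_slope, hslope,
    Set.sdiff_singleton_eq_self Set.self_notMem_Ioi] at hderiv
  rwa [dirDeriv, hderiv.limUnder_eq]

lemma dotp_le_div_of_mem_Subgrad (hg : g ∈ Subgrad b x) {δ : ℝ} (hδ : 0 < δ) :
    dotp g y ≤ (b (x + δ • y) - b x) / δ := by
  have h := hg (x + δ • y)
  rw [add_sub_cancel_left, dotp_smul_right] at h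
  rw [le_div_iff₀ hδ]
  linarith

lemma div_le_dotp_of_mem_Subgrad {δ : ℝ} (hg : g ∈ Subgrad b (x + δ • y)) (hδ : 0 < δ) :
    (b (x + δ • y) - b x) / δ ≤ dotp g y := by
  have h := hg x
  rw [sub_add_cancel_left, ← neg_one_smul ℝ (δ • y), smul_smul, dotp_smul_right] at h
  rw [div_le_iff₀ hδ]
  linarith

lemma le_dotp_self_of_mem_Subgrad (hb0 : b 0 = 0) (hg : g ∈ Subgrad b x) : b x ≤ dotp g x := by
  have h := hg 0
  rw [hb0, zero_sub, zero_sub, ← neg_one_smul ℝ x, dotp_smul_right] at h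
  linarith

lemma dotp_le_dirDeriv_of_mem_Subgrad (hb : ConvexOn ℝ Set.univ b) (hg : g ∈ Subgrad b x) :
    dotp g y ≤ dirDeriv b x y :=
  ge_of_tendsto (hb.tendsto_dirDeriv x y) <|
    eventually_mem_nhdsWithin.mono fun _ hδ => dotp_le_div_of_mem_Subgrad hg hδ

lemma mem_Subgrad_of_tendsto {ι : Type*} {l : Filter ι} [l.NeBot] (hb : Continuous b)
    {xs gs : ι → E k} (hxs : Tendsto xs l (nhds x)) (hgs : Tendsto gs l (nhds g))
    (hmem : ∀ i, gs i ∈ Subgrad b (xs i)) : g ∈ Subgrad b x := by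
  intro z
  rw [ge_iff_le, dotp_eq_inner]
  exact le_of_tendsto_of_tendsto' (hgs.inner (tendsto_const_nhds.sub hxs))
    (tendsto_const_nhds.sub ((hb.tendsto x).comp hxs))
    fun i => by simpa only [dotp_eq_inner, Function.comp_apply] using hmem i z

lemma BClass.nonneg_of_mem_orthant {Γ : Set (E k)} (hΓ : Γ ⊆ orthant k) (hb : BClass Γ b)
    (hx : x ∈ orthant k) : 0 ≤ b x := by
  obtain ⟨g, hg, hgΓ⟩ := hb.2.2 0
  have h := hg x
  rw [sub_zero, hb.2.1, sub_zero] at h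
  linarith [dotp_nonneg_of_mem_orthant (hΓ hgΓ) hx]

lemma BClass.exists_mem_Subgrad_inter_dotp_eq_dirDeriv {Γ : Set (E k)} (hΓc : IsCompact Γ)
    (hb : BClass Γ b) (x y : E k) :
    ∃ g ∈ Subgrad b x ∩ Γ, dotp g y = dirDeriv b x y := by
  obtain ⟨hconv, -, hsub⟩ := hb
  obtain ⟨δ, hδpos, hδ⟩ : ∃ δ : ℕ → ℝ, (∀ n, 0 < δ n) ∧ Tendsto δ atTop (nhds 0) :=
    ⟨_, fun _ => Nat.one_div_pos_of_nat, tendsto_one_div_add_atTop_nhds_zero_nat⟩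
  replace hδ : Tendsto δ atTop (nhdsWithin 0 (Set.Ioi 0)) :=
    tendsto_nhdsWithin_iff.mpr ⟨hδ, Eventually.of_forall hδpos⟩
  choose gs hgs using fun n => hsub (x + δ n • y)
  obtain ⟨g, hgΓ, φ, hφ, hgφ⟩ := hΓc.tendsto_subseq fun n => (hgs n).2
  have hδφ : Tendsto (δ ∘ φ) atTop (nhdsWithin 0 (Set.Ioi 0)) := hδ.comp hφ.tendsto_atTop
  have hxs : Tendsto (fun n => x + δ (φ n) • y) atTop (nhds x) := by
    simpa using tendsto_const_nhds.add ((tendsto_nhdsWithin_iff.mp hδφ).1.smul_const y)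
  have hg : g ∈ Subgrad b x :=
    mem_Subgrad_of_tendsto (continuousOn_univ.mp (hconv.continuousOn isOpen_univ)) hxs hgφ
      fun n => (hgs (φ n)).1
  refine ⟨g, ⟨hg, hgΓ⟩, le_antisymm (dotp_le_dirDeriv_of_mem_Subgrad hconv hg) ?_⟩
  have hdotp : Tendsto (fun n => dotp (gs (φ n)) y) atTop (nhds (dotp g y)) := by
    simpa only [dotp_eq_inner, Function.comp_apply] using hgφ.inner tendsto_const_nhds
  exact le_of_tendsto_of_tendsto' ((hconv.tendsto_dirDeriv x y).comp hδφ) hdotp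
    fun n => div_le_dotp_of_mem_Subgrad (hgs (φ n)).1 (hδpos _)

lemma isIC_of_mem_Subgrad {q : E k → E k} (hq : ∀ x, q x ∈ Subgrad b x) :
    IsIC q (fun x => dotp (q x) x - b x) := by
  intro x _ y _
  have h := hq y x
  rw [dotp_sub_right] at h
  simp only [ge_iff_le]
  linarith

end

theorem stmt4_general {k : ℕ} (Γ : Set (E k))
    (hΓc : IsCompact Γ) (hΓ : Γ ⊆ orthant k)
    (b : E k → ℝ) (hb : BClass Γ b) :
    ∃ q : E k → E k, ∃ s : E k → ℝ,
      IsAlloc Γ q ∧ IsIC q s ∧ IsIR q s ∧ IsNPT s ∧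
      (∀ x ∈ orthant k, dotp (q x) x - s x = b x) ∧
      (∀ x ∈ orthant k, s x = dirDeriv b x x - b x) ∧
      (∀ x ∈ orthant k, q x ∈ Subgrad b x ∩ Γ ∧ dotp (q x) x = dirDeriv b x x) := by
  choose q hq hdot using fun x => hb.exists_mem_Subgrad_inter_dotp_eq_dirDeriv hΓc x x
  have hpayoff : ∀ x, dotp (q x) x - (dotp (q x) x - b x) = b x := fun x => sub_sub_cancel _ _
  exact ⟨q, fun x => dotp (q x) x - b x, fun x _ => (hq x).2,
    isIC_of_mem_Subgrad fun x => (hq x).1,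
    fun x hx => (hpayoff x).symm ▸ hb.nonneg_of_mem_orthant hΓ hx,
    fun x _ => sub_nonneg.mpr (le_dotp_self_of_mem_Subgrad hb.2.1 (hq x).1),
    fun x _ => hpayoff x, fun x _ => congrArg (· - b x) (hdot x), fun x _ => ⟨hq x, hdot x⟩⟩

/-- every `b ∈ B_Γ` admits a seller-favorable IC, IR, NPT mechanism:
payments `s*(x) = b′(x;x) − b(x)`, with `q*(x) ∈ ∂b(x) ∩ Γ` and `q*(x)·x = b′(x;x)`. -/
theorem stmt4 {k : ℕ} (hk : 1 ≤ k) (Γ : Set (E k)) (hΓne : Γ.Nonempty)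
    (hΓc : IsCompact Γ) (hΓ : Γ ⊆ orthant k)
    (b : E k → ℝ) (hb : BClass Γ b) :
    ∃ q : E k → E k, ∃ s : E k → ℝ,
      IsAlloc Γ q ∧ IsIC q s ∧ IsIR q s ∧ IsNPT s ∧
      (∀ x ∈ orthant k, dotp (q x) x - s x = b x) ∧
      (∀ x ∈ orthant k, s x = dirDeriv b x x - b x) ∧
      (∀ x ∈ orthant k, q x ∈ Subgrad b x ∩ Γ ∧ dotp (q x) x = dirDeriv b x x) :=
  stmt4_general Γ hΓc hΓ b hb
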